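/- Let K ≥ 1, let γ_k > 0 and B_k > 0 for k = 1,…,K, let μ ∈ (0,1] and Υ > 0, and let ρ̂ > 0 be the unique solution of ∑_{k=1}^K γ_k·Λ(B_k·ρ̂/(2 − μ)) = Υ. Define ŝ_k = γ_k·Λ(B_k·ρ̂/(2 − μ)) for each k. Then ŝ is a global minimizer of the function s ↦ ∑_{k=1}^K (γ_k/B_k)·Θ(s_k/γ_k) over the set {s ∈ (0,∞)^K : ∑_{k=1}^K s_k = Υ}; that is, for every s ∈ (0,∞)^K with ∑_k s_k = Υ one has ∑_{k=1}^K (γ_k/B_k)·Θ(ŝ_k/γ_k) ≤ ∑_{k=1}^K (γ_k/B_k)·Θ(s_k/γ_k). -/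

import Mathlib

/-- `Θ(x) = x (2^{1/x} - 1)`. -/
noncomputable def Theta : ℝ → ℝ := fun x => x * ((2:ℝ) ^ (1/x) - 1)

/-- `f(x) = 1 + (ln 2)·2^{1/x}/x - 2^{1/x} = -Θ'(x)`. -/
noncomputable def fTheta : ℝ → ℝ :=
  fun x => 1 + Real.log 2 * (2:ℝ) ^ (1/x) / x - (2:ℝ) ^ (1/x)

/-- Tangent-line inequality for the convex function Θ: for `x, y > 0`,
`Θ(x) + Θ'(x)(y - x) ≤ Θ(y)`, i.e. `Θ(x) - fTheta(x)(y - x) ≤ Θ(y)`. -/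
lemma theta_tangent (x y : ℝ) (hx : 0 < x) (hy : 0 < y) :
    Theta x - fTheta x * (y - x) ≤ Theta y := by
  have h2 : (0:ℝ) < 2 := by norm_num
  have hrx : (2:ℝ) ^ (1/x) = Real.exp (Real.log 2 / x) := by
    rw [Real.rpow_def_of_pos h2]; ring_nf
  have hry : (2:ℝ) ^ (1/y) = Real.exp (Real.log 2 / y) := by
    rw [Real.rpow_def_of_pos h2]; ring_nf
  set a := Real.log 2 / x with ha
  set b := Real.log 2 / y with hb
  have hab : a * x = b * y := by
    rw [ha, hb, div_mul_cancel₀ _ hx.ne', div_mul_cancel₀ _ hy.ne']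
  have key : Real.exp a * (1 + (b - a)) ≤ Real.exp b := by
    have h1 : 1 + (b - a) ≤ Real.exp (b - a) := by
      linarith [Real.add_one_le_exp (b - a)]
    calc Real.exp a * (1 + (b - a)) ≤ Real.exp a * Real.exp (b - a) := by
          exact mul_le_mul_of_nonneg_left h1 (Real.exp_pos a).le
      _ = Real.exp b := by
          rw [← Real.exp_add]
          congr 1
          ring
  have hdiv : Real.log 2 * Real.exp a / x = a * Real.exp a := by
    rw [ha]; field_simp
  simp only [Theta, fTheta, hrx, hry]
  rw [hdiv]
  have keyy := mul_le_mul_of_nonneg_left key hy.le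
  have habE : a * x * Real.exp a = b * y * Real.exp a := by rw [hab]
  nlinarith [keyy, habE]

/-- If `ρ̂ > 0` is the unique solution of `∑ k γ_k Λ(B_k ρ̂/(2-μ)) = Υ` (with `Λ` the
inverse of `f = -Θ'`), then `ŝ_k = γ_k Λ(B_k ρ̂/(2-μ))` globally minimizes
`∑ k (γ_k/B_k) Θ(s_k/γ_k)` over `{s ∈ (0,∞)^K : ∑ k s_k = Υ}`. -/
theorem stmt_14 (K : ℕ) (hK : 1 ≤ K)
    (γ B : Fin K → ℝ) (hγ : ∀ k, 0 < γ k) (hB : ∀ k, 0 < B k)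
    (μ : ℝ) (hμ₁ : 0 < μ) (hμ₂ : μ ≤ 1)
    (Υ : ℝ) (hΥ : 0 < Υ)
    (Lam : ℝ → ℝ)
    (hLam₁ : ∀ x : ℝ, 0 < x → Lam (fTheta x) = x)
    (hLam₂ : ∀ y : ℝ, 0 < y → 0 < Lam y ∧ fTheta (Lam y) = y)
    (ρ : ℝ) (hρ : 0 < ρ)
    (hsum : ∑ k, γ k * Lam (B k * ρ / (2 - μ)) = Υ) :
    ∀ s : Fin K → ℝ, (∀ k, 0 < s k) → (∑ k, s k) = Υ →
      ∑ k, (γ k / B k) * Theta ((γ k * Lam (B k * ρ / (2 - μ))) / γ k) ≤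
        ∑ k, (γ k / B k) * Theta (s k / γ k) := by
  intro s hs hsΥ
  have hμ : (0:ℝ) < 2 - μ := by linarith
  have h1 : ∀ k, 0 < B k * ρ / (2 - μ) := fun k => by
    have := hB k; positivity
  set L : Fin K → ℝ := fun k => Lam (B k * ρ / (2 - μ)) with hL
  have hLpos : ∀ k, 0 < L k := fun k => (hLam₂ _ (h1 k)).1
  have hLf : ∀ k, fTheta (L k) = B k * ρ / (2 - μ) := fun k => (hLam₂ _ (h1 k)).2
  have hterm : ∀ k, (γ k / B k) * Theta ((γ k * L k) / γ k) ≤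
      (γ k / B k) * Theta (s k / γ k) + (ρ / (2 - μ)) * (s k - γ k * L k) := by
    intro k
    have hγk := hγ k; have hBk := hB k
    rw [mul_div_cancel_left₀ _ (ne_of_gt hγk)]
    have hy : 0 < s k / γ k := div_pos (hs k) hγk
    have htan := theta_tangent (L k) (s k / γ k) (hLpos k) hy
    rw [hLf k] at htan
    have hpos : 0 < γ k / B k := div_pos hγk hBk
    have hmul := mul_le_mul_of_nonneg_left
      (by linarith [htan] :
        Theta (L k) ≤ Theta (s k / γ k) + B k * ρ / (2 - μ) * (s k / γ k - L k)) hpos.le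
    have heq : (γ k / B k) * (B k * ρ / (2 - μ) * (s k / γ k - L k)) =
        (ρ / (2 - μ)) * (s k - γ k * L k) := by
      field_simp
    nlinarith [hmul, heq]
  calc ∑ k, (γ k / B k) * Theta ((γ k * L k) / γ k)
      ≤ ∑ k, ((γ k / B k) * Theta (s k / γ k) + (ρ / (2 - μ)) * (s k - γ k * L k)) :=
        Finset.sum_le_sum (fun k _ => hterm k)
    _ = (∑ k, (γ k / B k) * Theta (s k / γ k)) +
        (ρ / (2 - μ)) * ((∑ k, s k) - ∑ k, γ k * L k) := by
        rw [Finset.sum_add_distrib, ← Finset.mul_sum, Finset.sum_sub_distrib]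
    _ = ∑ k, (γ k / B k) * Theta (s k / γ k) := by
        rw [hsΥ, hsum, sub_self, mul_zero, add_zero]
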